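/- If C is a free E-linear code of length 2n, then the left symplectic double dual recovers C: (C^{⊥_{S_L}})^{⊥_{S_L}} = C. -/

import Mathlib

open Finset

/-- The non-unital ring `E`, realized as pairs `(u, v) ∈ F₂ × F₂`
representing `uκ + vζ`. -/
def Ering : Type := (ZMod 2) × (ZMod 2)

namespace Ering

instance : AddCommGroup Ering := inferInstanceAs (AddCommGroup ((ZMod 2) × (ZMod 2)))
instance : DecidableEq Ering := inferInstanceAs (DecidableEq ((ZMod 2) × (ZMod 2)))
instance : Fintype Ering := inferInstanceAs (Fintype ((ZMod 2) × (ZMod 2)))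

instance : Mul Ering := ⟨fun a b => (a.1 * b.1, a.2 * b.1)⟩

instance : NonUnitalRing Ering :=
  { (inferInstance : AddCommGroup Ering), (inferInstance : Mul Ering) with
    left_distrib := by decide
    right_distrib := by decide
    zero_mul := by decide
    mul_zero := by decide
    mul_assoc := by decide }

/-- The generator κ. -/
def kappa : Ering := ((1 : ZMod 2), (0 : ZMod 2))
/-- The generator τ. -/
def tau : Ering := ((1 : ZMod 2), (1 : ZMod 2))
/-- ζ = κ + τ. -/
def zeta : Ering := ((0 : ZMod 2), (1 : ZMod 2))

/-- The scalar action of `F₂` on `E`: `u • e = e` if `u = 1`, else `0`. -/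
def fsmul (u : ZMod 2) (e : Ering) : Ering := if u = 1 then e else 0

/-- `E`-vectors of length `2n`, written as a pair `(u | v)` of halves of length `n`. -/
abbrev VE (n : ℕ) := (Fin n → Ering) × (Fin n → Ering)

/-- `F₂`-vectors of length `2n`, written as a pair of halves of length `n`. -/
abbrev VF (n : ℕ) := (Fin n → ZMod 2) × (Fin n → ZMod 2)

/-- Symplectic inner product on `E^{2n}`: `⟨(u|v),(u'|v')⟩ₛ = ⟨u,v'⟩ + ⟨v,u'⟩`. -/
def sympE {n : ℕ} (x y : VE n) : Ering := ∑ i, x.1 i * y.2 i + ∑ i, x.2 i * y.1 i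

/-- Symplectic inner product on `F₂^{2n}`. -/
def sympF {n : ℕ} (x y : VF n) : ZMod 2 := ∑ i, x.1 i * y.2 i + ∑ i, x.2 i * y.1 i

/-- An `E`-linear code: a left `E`-submodule of `E^{2n}`. -/
def IsLinearCode {n : ℕ} (C : Set (VE n)) : Prop :=
  (0 : VE n) ∈ C ∧ (∀ x ∈ C, ∀ y ∈ C, x + y ∈ C) ∧
    (∀ e : Ering, ∀ x ∈ C, ((fun i => e * x.1 i, fun i => e * x.2 i) : VE n) ∈ C)

/-- Componentwise reduction `π : E^{2n} → F₂^{2n}`, `π(uκ + vζ) = u`. -/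
def resVec {n : ℕ} (x : VE n) : VF n := (fun i => (x.1 i).1, fun i => (x.2 i).1)

/-- For `e ∈ E` and `v ∈ F₂^{2n}`, the vector `ev ∈ E^{2n}` with entries `vᵢ • e`. -/
def evec {n : ℕ} (e : Ering) (v : VF n) : VE n :=
  (fun i => fsmul (v.1 i) e, fun i => fsmul (v.2 i) e)

/-- The residue code `C_Res = π(C)`. -/
def resCode {n : ℕ} (C : Set (VE n)) : Set (VF n) := resVec '' C

/-- The torsion code `C_Tor = {v : ζv ∈ C}`. -/
def torCode {n : ℕ} (C : Set (VE n)) : Set (VF n) := {v | evec zeta v ∈ C}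

/-- The left symplectic dual. -/
def leftDual {n : ℕ} (C : Set (VE n)) : Set (VE n) := {z | ∀ w ∈ C, sympE z w = 0}

/-- The right symplectic dual. -/
def rightDual {n : ℕ} (C : Set (VE n)) : Set (VE n) := {z | ∀ w ∈ C, sympE w z = 0}

/-- The two-sided symplectic dual. -/
def dual {n : ℕ} (C : Set (VE n)) : Set (VE n) := leftDual C ∩ rightDual C

/-- The binary symplectic dual of `D ⊆ F₂^{2n}`. -/
def dualF {n : ℕ} (D : Set (VF n)) : Set (VF n) := {z | ∀ w ∈ D, sympF z w = 0}

/-- The two-sided symplectic hull. -/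
def SHull {n : ℕ} (C : Set (VE n)) : Set (VE n) := C ∩ dual C

/-- The left symplectic hull. -/
def LSHull {n : ℕ} (C : Set (VE n)) : Set (VE n) := C ∩ leftDual C

/-- The right symplectic hull. -/
def RSHull {n : ℕ} (C : Set (VE n)) : Set (VE n) := C ∩ rightDual C

/-- Symplectic hull of a binary code. -/
def SHullF {n : ℕ} (D : Set (VF n)) : Set (VF n) := D ∩ dualF D

/-- A free `E`-linear code: residue and torsion codes coincide. -/
def IsFree {n : ℕ} (C : Set (VE n)) : Prop := resCode C = torCode C

end Ering

/-!
Write `e ∈ E` as `uκ + vζ`. Then `(uκ + vζ)(u'κ + v'ζ) = uu'κ + vu'ζ` only sees the residue `u'`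
of the right factor, so `⟨z, w⟩ₛ` has κ- and ζ-coefficients `⟨π z, π w⟩` and `⟨torVec z, π w⟩`.
Hence `z ∈ C^⊥` iff both `π z` and `torVec z` lie in `(C_Res)^⊥`, and `(C^⊥)_Res = (C_Res)^⊥`.
Applying this twice together with binary symplectic double duality, `z ∈ (C^⊥)^⊥` iff
`π z, torVec z ∈ C_Res`; for a free code `C_Res = C_Tor` this is exactly `z ∈ C`.
-/

namespace Ering

variable {n : ℕ}

lemma sympF_comm (x y : VF n) : sympF x y = sympF y x := by
  simp only [sympF, mul_comm (x.1 _), mul_comm (x.2 _), add_comm]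

lemma sympF_add_left (x x' y : VF n) : sympF (x + x') y = sympF x y + sympF x' y := by
  simp only [sympF, Prod.fst_add, Prod.snd_add, Pi.add_apply, add_mul, sum_add_distrib]
  ring

lemma sympF_smul_left (c : ZMod 2) (x y : VF n) : sympF (c • x) y = c • sympF x y := by
  simp only [sympF, Prod.smul_fst, Prod.smul_snd, Pi.smul_apply, smul_eq_mul, mul_assoc,
    ← mul_sum, mul_add]

variable (n) in
def sympForm : LinearMap.BilinForm (ZMod 2) (VF n) :=
  LinearMap.mk₂ (ZMod 2) sympF sympF_add_left sympF_smul_left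
    (fun x y y' => by rw [sympF_comm, sympF_add_left, sympF_comm y, sympF_comm y'])
    (fun c x y => by rw [sympF_comm, sympF_smul_left, sympF_comm y])

lemma sympForm_apply (x y : VF n) : sympForm n x y = sympF x y := rfl

lemma sympForm_isRefl : (sympForm n).IsRefl := fun x y h => by
  rwa [sympForm_apply, sympF_comm]

lemma sympForm_nondegenerate : (sympForm n).Nondegenerate := by
  refine sympForm_isRefl.nondegenerate_iff_separatingLeft.mpr fun x hx => Prod.ext ?_ ?_ <;>
    funext i
  · simpa [sympForm_apply, sympF, Pi.single_apply] using hx (0, Pi.single i 1)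
  · simpa [sympForm_apply, sympF, Pi.single_apply] using hx (Pi.single i 1, 0)

lemma dualF_eq_orthogonal (W : Submodule (ZMod 2) (VF n)) :
    dualF (W : Set (VF n)) = (sympForm n).orthogonal W := by
  ext z
  exact forall₂_congr fun w _ => by rw [sympForm_apply, sympF_comm]

lemma dualF_dualF (W : Submodule (ZMod 2) (VF n)) : dualF (dualF (W : Set (VF n))) = W := by
  rw [dualF_eq_orthogonal, dualF_eq_orthogonal,
    LinearMap.BilinForm.orthogonal_orthogonal sympForm_nondegenerate sympForm_isRefl]

def torVec (x : VE n) : VF n := (fun i => (x.1 i).2, fun i => (x.2 i).2)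

-- `Ering` is a type synonym, so `Prod.fst_sum` does not fire on sums in `Ering`.
def fstHom : Ering →+ ZMod 2 := AddMonoidHom.fst (ZMod 2) (ZMod 2)
def sndHom : Ering →+ ZMod 2 := AddMonoidHom.snd (ZMod 2) (ZMod 2)

lemma sympE_eq (z w : VE n) :
    sympE z w =
      ((sympF (resVec z) (resVec w), sympF (torVec z) (resVec w)) : ZMod 2 × ZMod 2) := by
  refine Prod.ext ?_ ?_
  · change fstHom (sympE z w) = _
    simp only [sympE, map_add, map_sum]
    rfl
  · change sndHom (sympE z w) = _
    simp only [sympE, map_add, map_sum]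
    rfl

lemma sympE_eq_zero_iff (z w : VE n) :
    sympE z w = 0 ↔ sympF (resVec z) (resVec w) = 0 ∧ sympF (torVec z) (resVec w) = 0 := by
  rw [sympE_eq]
  exact Prod.mk_eq_zero

lemma mem_leftDual_iff (C : Set (VE n)) (z : VE n) :
    z ∈ leftDual C ↔ resVec z ∈ dualF (resCode C) ∧ torVec z ∈ dualF (resCode C) := by
  simp only [leftDual, dualF, resCode, Set.mem_ofPred_eq, Set.forall_mem_image, sympE_eq_zero_iff,
    forall_and]

lemma kappa_mul_eq_fsmul : ∀ e : Ering, kappa * e = fsmul e.1 kappa := by decide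

lemma add_kappa_mul_eq_fsmul : ∀ e : Ering, e + kappa * e = fsmul e.2 zeta := by decide

lemma eq_fsmul_kappa_add_fsmul_zeta : ∀ e : Ering, e = fsmul e.1 kappa + fsmul e.2 zeta := by
  decide

lemma fsmul_kappa_fst : ∀ c : ZMod 2, (fsmul c kappa).1 = c := by decide

lemma fsmul_kappa_snd : ∀ c : ZMod 2, (fsmul c kappa).2 = 0 := by decide

lemma eq_evec_kappa_add_evec_zeta (z : VE n) :
    z = evec kappa (resVec z) + evec zeta (torVec z) :=
  Prod.ext (funext fun _ => eq_fsmul_kappa_add_fsmul_zeta _)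
    (funext fun _ => eq_fsmul_kappa_add_fsmul_zeta _)

lemma resVec_evec_kappa (a : VF n) : resVec (evec kappa a) = a :=
  Prod.ext (funext fun _ => fsmul_kappa_fst _) (funext fun _ => fsmul_kappa_fst _)

lemma torVec_evec_kappa (a : VF n) : torVec (evec kappa a) = 0 :=
  Prod.ext (funext fun _ => fsmul_kappa_snd _) (funext fun _ => fsmul_kappa_snd _)

lemma resCode_leftDual (C : Set (VE n)) : resCode (leftDual C) = dualF (resCode C) := by
  refine subset_antisymm ?_ fun a ha => ⟨evec kappa a, ?_, resVec_evec_kappa a⟩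
  · rintro _ ⟨z, hz, rfl⟩
    exact ((mem_leftDual_iff C z).mp hz).1
  · refine (mem_leftDual_iff C _).mpr ⟨by rwa [resVec_evec_kappa], ?_⟩
    rw [torVec_evec_kappa]
    intro w _
    simp [sympF]

lemma IsLinearCode.evec_kappa_mem {C : Set (VE n)} (hC : IsLinearCode C) {a : VF n}
    (ha : a ∈ resCode C) : evec kappa a ∈ C := by
  obtain ⟨x, hx, rfl⟩ := ha
  convert hC.2.2 kappa x hx using 1
  exact Prod.ext (funext fun _ => (kappa_mul_eq_fsmul _).symm)
    (funext fun _ => (kappa_mul_eq_fsmul _).symm)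

lemma IsLinearCode.evec_zeta_torVec_mem {C : Set (VE n)} (hC : IsLinearCode C) {x : VE n}
    (hx : x ∈ C) : evec zeta (torVec x) ∈ C := by
  convert hC.2.1 x hx _ (hC.2.2 kappa x hx) using 1
  exact Prod.ext (funext fun _ => (add_kappa_mul_eq_fsmul _).symm)
    (funext fun _ => (add_kappa_mul_eq_fsmul _).symm)

lemma IsFree.mem_iff {C : Set (VE n)} (hC : IsLinearCode C) (hfree : IsFree C) (z : VE n) :
    z ∈ C ↔ resVec z ∈ resCode C ∧ torVec z ∈ resCode C := by
  refine ⟨fun hz => ⟨⟨z, hz, rfl⟩, hfree.symm ▸ hC.evec_zeta_torVec_mem hz⟩,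
    fun ⟨hres, htor⟩ => ?_⟩
  have htor' : torVec z ∈ torCode C := hfree ▸ htor
  rw [eq_evec_kappa_add_evec_zeta z]
  exact hC.2.1 _ (hC.evec_kappa_mem hres) _ htor'

def IsLinearCode.resSubmodule {C : Set (VE n)} (hC : IsLinearCode C) :
    Submodule (ZMod 2) (VF n) where
  carrier := resCode C
  zero_mem' := ⟨0, hC.1, rfl⟩
  add_mem' := by
    rintro _ _ ⟨x, hx, rfl⟩ ⟨y, hy, rfl⟩
    exact ⟨x + y, hC.2.1 x hx y hy, rfl⟩
  smul_mem' c a ha := by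
    fin_cases c
    · exact zero_smul (ZMod 2) a ▸ ⟨0, hC.1, rfl⟩
    · exact (one_smul (ZMod 2) a).symm ▸ ha

end Ering

open Ering
/-- for a free code, the left symplectic double dual recovers `C`. -/
theorem Ering.leftDual_leftDual {n : ℕ} (C : Set (VE n)) (hC : IsLinearCode C)
    (hfree : IsFree C) : leftDual (leftDual C) = C := by
  ext z
  have hdd : dualF (dualF (resCode C)) = resCode C := dualF_dualF hC.resSubmodule
  rw [mem_leftDual_iff, resCode_leftDual, hdd, hfree.mem_iff hC]
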